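/- Every primitive Hausdorff pseudocompact topological inverse semigroup S is a Tychonoff topological space. Moreover, the topological space of S is normal if and only if every maximal subgroup of S is a normal subspace of S. -/

import Mathlib

open Topology

/-- A (Hausdorff) topological space is *pseudocompact* if every locally finite
family of non-empty open subsets is finite. -/
def IsPseudocompact (X : Type*) [TopologicalSpace X] : Prop :=
  ∀ 𝒰 : Set (Set X), (∀ U ∈ 𝒰, IsOpen U ∧ U.Nonempty) →
    LocallyFinite (fun U : 𝒰 => (U : Set X)) → 𝒰.Finite

/-- `inv` witnesses that the semigroup `S` is an *inverse semigroup*: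
for every `x`, `inv x` is the unique `y` with `x*y*x = x` and `y*x*y = y`. -/
structure IsInverseSemigroup (S : Type*) [Mul S] (inv : S → S) : Prop where
  mul_inv_mul : ∀ x : S, x * inv x * x = x
  inv_mul_inv : ∀ x : S, inv x * x * inv x = inv x
  inv_unique : ∀ x y : S, x * y * x = x → y * x * y = y → y = inv x

/-- A semigroup with zero is *primitive* when every non-zero idempotent is
minimal among non-zero idempotents for the natural partial order
`f ≤ e ↔ f*e = e*f = f`. -/
def IsPrimitiveInverse (S : Type*) [Mul S] [Zero S] : Prop :=
  ∀ e f : S, IsIdempotentElem e → e ≠ 0 → IsIdempotentElem f → f ≠ 0 →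
    f * e = f → e * f = f → f = e

/-- A subset `H` of a semigroup is a *subgroup* if it is closed under
multiplication and is a group under the induced operation. -/
def IsSubgroupSet (S : Type*) [Mul S] (H : Set S) : Prop :=
  H.Nonempty ∧ (∀ a ∈ H, ∀ b ∈ H, a * b ∈ H) ∧
    ∃ e ∈ H, (∀ a ∈ H, e * a = a ∧ a * e = a) ∧ ∀ a ∈ H, ∃ b ∈ H, a * b = e ∧ b * a = e

/-- A *maximal subgroup* of a semigroup: a subgroup not properly contained in
any other subgroup. -/
def IsMaximalSubgroup (S : Type*) [Mul S] (H : Set S) : Prop :=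
  IsSubgroupSet S H ∧ ∀ K : Set S, IsSubgroupSet S K → H ⊆ K → K = H

/-!
In a primitive inverse semigroup distinct non-zero idempotents are orthogonal, so the
`ℋ`-class of a non-zero `x` is cut out by the open conditions `s * inv s * (x * inv x) ≠ 0` and
`inv s * s * (inv x * x) ≠ 0`: it is clopen. Left multiplication by `inv x` maps it
homeomorphically onto the `ℋ`-class of the idempotent `inv x * x`, a topological group, hence a
completely regular space; the maximal subgroups are exactly these classes. Pseudocompactness gives
every neighbourhood `U` of `0` a smaller neighbourhood whose non-zero points have their whole
`ℋ`-class inside `U`, so `0` has a base of clopen neighbourhoods. Complete regularity and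
normality then reduce to the clopen `ℋ`-classes and a clopen neighbourhood of `0`.
-/

open Set unitInterval

section GeneralTopology

variable {X : Type*} [TopologicalSpace X]

theorem IsPseudocompact.finite_of_locallyFinite (hX : IsPseudocompact X) {ι : Type*}
    {f : ι → Set X} (hf : LocallyFinite f) (hopen : ∀ i, IsOpen (f i))
    (hne : ∀ i, (f i).Nonempty) : Finite ι := by
  have hrange : (range f).Finite :=
    hX _ (forall_mem_range.2 fun i => ⟨hopen i, hne i⟩) hf.on_range
  have hfibres : ∀ U ∈ range f, (f ⁻¹' {U}).Finite := by
    rintro _ ⟨i, rfl⟩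
    obtain ⟨x, hx⟩ := hne i
    exact (hf.point_finite x).subset fun j (hj : f j = f i) => by rwa [mem_ofPred_eq, hj]
  rw [← Set.finite_univ_iff, ← preimage_range f]
  exact hrange.preimage' hfibres

theorem exists_isOpen_mem_forall_mem₃ {Y : Type*} [TopologicalSpace Y] {g : X → X → X → Y}
    (hg : Continuous fun p : X × X × X => g p.1 p.2.1 p.2.2) {x : X} {U : Set Y}
    (hU : U ∈ 𝓝 (g x x x)) :
    ∃ W, IsOpen W ∧ x ∈ W ∧ ∀ a ∈ W, ∀ b ∈ W, ∀ c ∈ W, g a b c ∈ U := by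
  obtain ⟨u, v, hu, hxu, hv, hxv, huv⟩ :=
    mem_nhds_prod_iff'.1 (hg.continuousAt (x := (x, x, x)) hU)
  obtain ⟨v₁, v₂, hv₁, hxv₁, hv₂, hxv₂, hv₁₂⟩ := mem_nhds_prod_iff'.1 (hv.mem_nhds hxv)
  refine ⟨u ∩ v₁ ∩ v₂, hu.inter hv₁ |>.inter hv₂, ⟨⟨hxu, hxv₁⟩, hxv₂⟩, ?_⟩
  rintro a ⟨⟨ha, -⟩, -⟩ b ⟨⟨-, hb⟩, -⟩ c ⟨-, hc⟩
  exact huv (mk_mem_prod ha (hv₁₂ (mk_mem_prod hb hc)))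

theorem IsClopen.exists_continuous_extend {A : Set X} (hA : IsClopen A) {g : A → I}
    (hg : Continuous g) :
    ∃ f : X → I, Continuous f ∧ (∀ a : A, f a = g a) ∧ EqOn f 1 Aᶜ := by
  classical
  let f : X → I := fun x => if hx : x ∈ A then g ⟨x, hx⟩ else 1
  have hfA : ContinuousOn f A := by
    rw [continuousOn_iff_continuous_domRestrict]
    convert hg using 1
    ext ⟨x, hx⟩
    simp [f, hx]
  have hfAc : ContinuousOn f Aᶜ := continuousOn_const.congr fun x hx => dif_neg hx
  refine ⟨f, ?_, fun a => dif_pos a.2, fun x hx => dif_neg hx⟩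
  rw [← continuousOn_univ, ← union_compl_self A]
  exact hfA.union_of_isOpen hfAc hA.isOpen hA.compl.isOpen

theorem separatedNhds_inter_of_isOpen {A : Set X} (hA : IsOpen A) [NormalSpace A] {s t : Set X}
    (hs : IsClosed s) (ht : IsClosed t) (hst : Disjoint s t) : SeparatedNhds (s ∩ A) (t ∩ A) := by
  obtain ⟨U, V, hU, hV, hsU, htV, hUV⟩ := normal_separation
    (hs.preimage (continuous_subtype_val (p := (· ∈ A))))
    (ht.preimage continuous_subtype_val) (hst.preimage Subtype.val)
  refine ⟨(↑) '' U, (↑) '' V, hA.isOpenMap_subtype_val U hU, hA.isOpenMap_subtype_val V hV,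
    fun x hx => ⟨⟨x, hx.2⟩, hsU hx.1, rfl⟩, fun x hx => ⟨⟨x, hx.2⟩, htV hx.1, rfl⟩,
    (disjoint_image_iff Subtype.val_injective).2 hUV⟩

theorem SeparatedNhds.of_isClopen_of_pairwiseDisjoint {C : Set X} (hC : IsClopen C)
    {𝒜 : Set (Set X)} (h𝒜 : 𝒜.PairwiseDisjoint id) (hopen : ∀ A ∈ 𝒜, IsOpen A)
    (hnormal : ∀ A ∈ 𝒜, NormalSpace A) (hcover : Cᶜ ⊆ ⋃₀ 𝒜) {s t : Set X} (hs : IsClosed s)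
    (ht : IsClosed t) (hst : Disjoint s t) (htC : Disjoint t C) : SeparatedNhds s t := by
  have hsep : ∀ A ∈ 𝒜, SeparatedNhds (s ∩ A) (t ∩ A) := fun A hA =>
    have := hnormal A hA
    separatedNhds_inter_of_isOpen (hopen A hA) hs ht hst
  choose! U V hU hV hsU htV hUV using hsep
  refine ⟨C ∪ ⋃ A ∈ 𝒜, U A ∩ A, (⋃ A ∈ 𝒜, V A ∩ A) \ C,
    hC.isOpen.union (isOpen_biUnion fun A hA => (hU A hA).inter (hopen A hA)),
    (isOpen_biUnion fun A hA => (hV A hA).inter (hopen A hA)).sdiff hC.isClosed, ?_, ?_, ?_⟩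
  · intro x hx
    by_cases hxC : x ∈ C
    · exact Or.inl hxC
    obtain ⟨A, hA, hxA⟩ := hcover hxC
    exact Or.inr (mem_biUnion hA ⟨hsU A hA ⟨hx, hxA⟩, hxA⟩)
  · intro x hx
    have hxC : x ∉ C := htC.notMem_of_mem_left hx
    obtain ⟨A, hA, hxA⟩ := hcover hxC
    exact ⟨mem_biUnion hA ⟨htV A hA ⟨hx, hxA⟩, hxA⟩, hxC⟩
  · rw [Set.disjoint_left]
    rintro x (hxC | hxU) ⟨hxV, hxC'⟩
    · exact hxC' hxC
    obtain ⟨A, hA, hxUA, hxA⟩ := mem_iUnion₂.1 hxU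
    obtain ⟨B, hB, hxVB, hxB⟩ := mem_iUnion₂.1 hxV
    obtain rfl : A = B := h𝒜.elim hA hB (not_disjoint_iff.2 ⟨x, hxA, hxB⟩)
    exact Set.disjoint_left.1 (hUV A hA) hxUA hxVB

end GeneralTopology

namespace IsInverseSemigroup

section Semigroup

variable {S : Type*} [Semigroup S] {inv : S → S}

theorem inv_inv (h : IsInverseSemigroup S inv) (x : S) : inv (inv x) = x :=
  (h.inv_unique _ _ (h.inv_mul_inv x) (h.mul_inv_mul x)).symm

theorem isIdempotentElem_mul_inv (h : IsInverseSemigroup S inv) (x : S) :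
    IsIdempotentElem (x * inv x) := by
  rw [IsIdempotentElem, ← mul_assoc, h.mul_inv_mul]

theorem isIdempotentElem_inv_mul (h : IsInverseSemigroup S inv) (x : S) :
    IsIdempotentElem (inv x * x) := by
  rw [IsIdempotentElem, ← mul_assoc, h.inv_mul_inv]

theorem inv_eq_self (h : IsInverseSemigroup S inv) {e : S} (he : IsIdempotentElem e) :
    inv e = e :=
  (h.inv_unique e e (by rw [he.eq, he.eq]) (by rw [he.eq, he.eq])).symm

/-- `f * inv (e * f) * e` is another inverse of `e * f`, so it equals `inv (e * f)`, which is
therefore idempotent; hence so is its inverse `e * f`. -/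
theorem isIdempotentElem_mul (h : IsInverseSemigroup S inv) {e f : S} (he : IsIdempotentElem e)
    (hf : IsIdempotentElem f) : IsIdempotentElem (e * f) := by
  set b := inv (e * f) with hb_def
  have h₁ : e * f * b * (e * f) = e * f := h.mul_inv_mul (e * f)
  have h₂ : b * (e * f) * b = b := h.inv_mul_inv (e * f)
  have hb : f * b * e = b :=
    h.inv_unique _ _ (by grind [IsIdempotentElem]) (by grind [IsIdempotentElem])
  have hb' : IsIdempotentElem b :=
    calc b * b = (f * b * e) * (f * b * e) := by rw [hb]
      _ = f * (b * (e * f) * b) * e := by simp only [mul_assoc]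
      _ = b := by rw [h₂, hb]
  rw [← h.inv_inv (e * f), ← hb_def, h.inv_eq_self hb']
  exact hb'

theorem commute_of_isIdempotentElem (h : IsInverseSemigroup S inv) {e f : S}
    (he : IsIdempotentElem e) (hf : IsIdempotentElem f) : Commute e f := by
  have hef := h.isIdempotentElem_mul he hf
  have hfe := h.isIdempotentElem_mul hf he
  have : f * e = inv (e * f) :=
    h.inv_unique _ _ (by grind [IsIdempotentElem]) (by grind [IsIdempotentElem])
  rw [Commute, SemiconjBy, this, h.inv_eq_self hef]

theorem inv_mul_rev (h : IsInverseSemigroup S inv) (x y : S) :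
    inv (x * y) = inv y * inv x := by
  have hc := h.commute_of_isIdempotentElem (h.isIdempotentElem_mul_inv y)
    (h.isIdempotentElem_inv_mul x)
  exact (h.inv_unique _ _ (by grind [Commute, SemiconjBy, h.mul_inv_mul])
    (by grind [Commute, SemiconjBy, h.inv_mul_inv])).symm

end Semigroup

variable {S : Type*} [SemigroupWithZero S] {inv : S → S}

theorem mul_inv_ne_zero (h : IsInverseSemigroup S inv) {x : S} (hx : x ≠ 0) : x * inv x ≠ 0 :=
  fun h0 => hx (by rw [← h.mul_inv_mul x, h0, zero_mul])

theorem inv_mul_ne_zero (h : IsInverseSemigroup S inv) {x : S} (hx : x ≠ 0) : inv x * x ≠ 0 :=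
  fun h0 => hx (by rw [← h.mul_inv_mul x, mul_assoc, h0, mul_zero])

theorem eq_of_mul_ne_zero (h : IsInverseSemigroup S inv) (hprim : IsPrimitiveInverse S)
    {e f : S} (he : IsIdempotentElem e) (hf : IsIdempotentElem f) (hfe : f * e ≠ 0) : f = e := by
  have hc := h.commute_of_isIdempotentElem he hf
  have hfe' : IsIdempotentElem (f * e) := h.isIdempotentElem_mul hf he
  have he0 : e ≠ 0 := by rintro rfl; exact hfe (mul_zero f)
  have hf0 : f ≠ 0 := by rintro rfl; exact hfe (zero_mul e)
  have h₁ : f * e = e := hprim e (f * e) he he0 hfe' hfe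
    (by grind [IsIdempotentElem]) (by grind [IsIdempotentElem, Commute, SemiconjBy])
  have h₂ : f * e = f := hprim f (f * e) hf hf0 hfe' hfe
    (by grind [IsIdempotentElem, Commute, SemiconjBy]) (by grind [IsIdempotentElem])
  exact h₂.symm.trans h₁

end IsInverseSemigroup

/-- Green's `ℋ`-class of `x`, in the form it takes in an inverse semigroup. -/
def hClass {S : Type*} [Mul S] (inv : S → S) (x : S) : Set S :=
  {s | s * inv s = x * inv x ∧ inv s * s = inv x * x}

namespace hClass

section Semigroup

variable {S : Type*} [Semigroup S] {inv : S → S}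

theorem mem_self (x : S) : x ∈ hClass inv x := ⟨rfl, rfl⟩

theorem eq_of_mem {x s : S} (hs : s ∈ hClass inv x) : hClass inv s = hClass inv x := by
  ext z
  simp only [hClass, Set.mem_ofPred_eq, hs.1, hs.2]

theorem eq_of_mem_of_mem {x y z : S} (hx : z ∈ hClass inv x) (hy : z ∈ hClass inv y) :
    hClass inv x = hClass inv y :=
  (eq_of_mem hx).symm.trans (eq_of_mem hy)

theorem mul_inv_self_mul_of_mem (h : IsInverseSemigroup S inv) {x s : S} (hs : s ∈ hClass inv x) :
    x * inv x * s = s := by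
  rw [← hs.1, h.mul_inv_mul]

theorem mul_inv_mul_self_of_mem (h : IsInverseSemigroup S inv) {x s : S} (hs : s ∈ hClass inv x) :
    s * inv x * x = s := by
  rw [mul_assoc, ← hs.2, ← mul_assoc, h.mul_inv_mul]

theorem mul_inv_mul_inv_mul (h : IsInverseSemigroup S inv) {y s q : S}
    (hs : s ∈ hClass inv y) (hq : q ∈ hClass inv y) : q * inv (s * inv y * q) * s = y := by
  rw [h.inv_mul_rev, h.inv_mul_rev, h.inv_inv]
  calc q * (inv q * (y * inv s)) * s = q * inv q * y * (inv s * s) := by simp only [mul_assoc]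
    _ = y := by rw [hq.1, hs.2, h.mul_inv_mul, ← mul_assoc, h.mul_inv_mul]

theorem mem_iff_of_isIdempotentElem (h : IsInverseSemigroup S inv) {e s : S}
    (he : IsIdempotentElem e) : s ∈ hClass inv e ↔ s * inv s = e ∧ inv s * s = e := by
  rw [hClass, Set.mem_ofPred_eq, h.inv_eq_self he, he.eq]

theorem inv_mul_mem (h : IsInverseSemigroup S inv) {x z : S} (hz : z ∈ hClass inv x) :
    inv x * z ∈ hClass inv (inv x * x) := by
  simp only [hClass, Set.mem_ofPred_eq, h.inv_mul_rev, h.inv_inv,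
    (h.isIdempotentElem_inv_mul x).eq]
  constructor
  · calc inv x * z * (inv z * x) = inv x * (z * inv z) * x := by simp only [mul_assoc]
      _ = inv x * x := by rw [hz.1, ← mul_assoc, h.inv_mul_inv]
  · calc inv z * x * (inv x * z) = inv z * (x * inv x) * z := by simp only [mul_assoc]
      _ = inv x * x := by rw [← hz.1, ← mul_assoc, h.inv_mul_inv, hz.2]

theorem mul_mem (h : IsInverseSemigroup S inv) {x w : S} (hw : w ∈ hClass inv (inv x * x)) :
    x * w ∈ hClass inv x := by
  rw [mem_iff_of_isIdempotentElem h (h.isIdempotentElem_inv_mul x)] at hw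
  simp only [hClass, Set.mem_ofPred_eq, h.inv_mul_rev]
  constructor
  · calc x * w * (inv w * inv x) = x * (w * inv w) * inv x := by simp only [mul_assoc]
      _ = x * inv x := by rw [hw.1, ← mul_assoc, h.mul_inv_mul]
  · calc inv w * inv x * (x * w) = inv w * (inv x * x) * w := by simp only [mul_assoc]
      _ = inv x * x := by rw [← hw.1, ← mul_assoc, h.inv_mul_inv, hw.2, hw.1]

theorem mul_mem_of_isIdempotentElem (h : IsInverseSemigroup S inv) {e a b : S}
    (he : IsIdempotentElem e) (ha : a ∈ hClass inv e) (hb : b ∈ hClass inv e) :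
    a * b ∈ hClass inv e := by
  rw [mem_iff_of_isIdempotentElem h he] at ha hb ⊢
  rw [h.inv_mul_rev]
  constructor
  · calc a * b * (inv b * inv a) = a * (inv a * a) * inv a := by
          rw [ha.2, ← hb.1]; simp only [mul_assoc]
      _ = e := by rw [← mul_assoc, h.mul_inv_mul, ha.1]
  · calc inv b * inv a * (a * b) = inv b * (b * inv b) * b := by
          rw [hb.1, ← ha.2]; simp only [mul_assoc]
      _ = e := by rw [← mul_assoc, h.inv_mul_inv, hb.2]

theorem inv_mem_of_isIdempotentElem (h : IsInverseSemigroup S inv) {e a : S}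
    (he : IsIdempotentElem e) (ha : a ∈ hClass inv e) : inv a ∈ hClass inv e := by
  rw [mem_iff_of_isIdempotentElem h he] at ha ⊢
  rw [h.inv_inv]
  exact ha.symm

theorem isSubgroupSet (h : IsInverseSemigroup S inv) {e : S} (he : IsIdempotentElem e) :
    IsSubgroupSet S (hClass inv e) := by
  refine ⟨⟨e, mem_self e⟩, fun a ha b hb => mul_mem_of_isIdempotentElem h he ha hb,
    e, mem_self e, fun a ha => ?_, fun a ha => ?_⟩
  · rw [mem_iff_of_isIdempotentElem h he] at ha
    exact ⟨by rw [← ha.1, h.mul_inv_mul], by rw [← ha.2, ← mul_assoc, h.mul_inv_mul]⟩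
  · exact ⟨inv a, inv_mem_of_isIdempotentElem h he ha, (mem_iff_of_isIdempotentElem h he).1 ha⟩

/-- The group inverse of `a` in `K` is `inv a`. -/
theorem subset_of_isGroup (h : IsInverseSemigroup S inv) {K : Set S} {g : S} (hg : g ∈ K)
    (hid : ∀ a ∈ K, g * a = a ∧ a * g = a) (hinv : ∀ a ∈ K, ∃ b ∈ K, a * b = g ∧ b * a = g) :
    K ⊆ hClass inv g := by
  intro a ha
  obtain ⟨b, hb, hab, hba⟩ := hinv a ha
  have hb_eq : b = inv a :=
    h.inv_unique a b (by rw [hab, (hid a ha).1]) (by rw [hba, (hid b hb).1])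
  rw [mem_iff_of_isIdempotentElem h (hid g hg).1, ← hb_eq]
  exact ⟨hab, hba⟩

theorem isMaximalSubgroup (h : IsInverseSemigroup S inv) {e : S} (he : IsIdempotentElem e) :
    IsMaximalSubgroup S (hClass inv e) := by
  refine ⟨isSubgroupSet h he, fun K ⟨_, _, g, hg, hid, hinv⟩ hsub => ?_⟩
  have heK : e ∈ K := hsub (mem_self e)
  obtain ⟨b, -, heb, -⟩ := hinv e heK
  -- `e` is an idempotent of the group `K`, hence its identity
  have hge : g = e :=
    calc g = e * e * b := by rw [he.eq, heb]
      _ = e := by rw [mul_assoc, heb, (hid e heK).2]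
  subst hge
  exact (subset_of_isGroup h hg hid hinv).antisymm hsub

abbrev group (h : IsInverseSemigroup S inv) {e : S} (he : IsIdempotentElem e) :
    Group (hClass inv e) where
  mul a b := ⟨a * b, mul_mem_of_isIdempotentElem h he a.2 b.2⟩
  mul_assoc a b c := Subtype.ext (mul_assoc (a : S) b c)
  one := ⟨e, mem_self e⟩
  one_mul a := Subtype.ext <| show e * a = a by
    simpa [h.inv_eq_self he, he.eq] using mul_inv_self_mul_of_mem h a.2
  mul_one a := Subtype.ext <| show a * e = a by
    simpa [h.inv_eq_self he, he.eq, mul_assoc] using mul_inv_mul_self_of_mem h a.2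
  inv a := ⟨inv a, inv_mem_of_isIdempotentElem h he a.2⟩
  inv_mul_cancel a := Subtype.ext ((mem_iff_of_isIdempotentElem h he).1 a.2).2

variable [TopologicalSpace S] [ContinuousMul S]

theorem completelyRegularSpace (h : IsInverseSemigroup S inv) (hinvc : Continuous inv) {e : S}
    (he : IsIdempotentElem e) : CompletelyRegularSpace (hClass inv e) := by
  let := group h he
  have : IsTopologicalGroup (hClass inv e) :=
    { continuous_mul := Continuous.subtype_mk
        (by fun_prop : Continuous fun p : hClass inv e × hClass inv e => (p.1 : S) * p.2) _
      continuous_inv := (hinvc.comp continuous_subtype_val).subtype_mk _ }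
  exact .of_exists_uniformSpace ⟨IsTopologicalGroup.rightUniformSpace _, rfl⟩

def homeomorphInvMul (h : IsInverseSemigroup S inv) (x : S) :
    hClass inv x ≃ₜ hClass inv (inv x * x) where
  toFun z := ⟨inv x * z, inv_mul_mem h z.2⟩
  invFun w := ⟨x * w, mul_mem h w.2⟩
  left_inv z := Subtype.ext <| show x * (inv x * z) = z by
    rw [← mul_assoc, mul_inv_self_mul_of_mem h z.2]
  right_inv := fun ⟨w, hw⟩ => Subtype.ext <| show inv x * (x * w) = w by
    rw [mem_iff_of_isIdempotentElem h (h.isIdempotentElem_inv_mul x)] at hw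
    rw [← mul_assoc, ← hw.1, h.mul_inv_mul]
  continuous_toFun := by fun_prop
  continuous_invFun := by fun_prop

end Semigroup

variable {S : Type*} [SemigroupWithZero S] {inv : S → S}

theorem ne_zero_of_mem (h : IsInverseSemigroup S inv) {x s : S} (hx : x ≠ 0)
    (hs : s ∈ hClass inv x) : s ≠ 0 := by
  rintro rfl
  exact h.mul_inv_ne_zero hx (by rw [← hs.1, zero_mul])

variable [TopologicalSpace S] [ContinuousMul S]

theorem isClosed [T2Space S] (hinvc : Continuous inv) (x : S) : IsClosed (hClass inv x) :=
  (isClosed_eq (by fun_prop) continuous_const).inter (isClosed_eq (by fun_prop) continuous_const)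

theorem isOpen [T1Space S] (h : IsInverseSemigroup S inv) (hprim : IsPrimitiveInverse S)
    (hinvc : Continuous inv) {x : S} (hx : x ≠ 0) : IsOpen (hClass inv x) := by
  have hclass : hClass inv x =
      {s | s * inv s * (x * inv x) ≠ 0} ∩ {s | inv s * s * (inv x * x) ≠ 0} := by
    ext s
    refine ⟨fun hs => ?_, fun hs => ?_⟩
    · rw [Set.mem_inter_iff, Set.mem_ofPred_eq, Set.mem_ofPred_eq, hs.1, hs.2,
        (h.isIdempotentElem_mul_inv x).eq, (h.isIdempotentElem_inv_mul x).eq]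
      exact ⟨h.mul_inv_ne_zero hx, h.inv_mul_ne_zero hx⟩
    · exact ⟨h.eq_of_mul_ne_zero hprim (h.isIdempotentElem_mul_inv x)
          (h.isIdempotentElem_mul_inv s) hs.1,
        h.eq_of_mul_ne_zero hprim (h.isIdempotentElem_inv_mul x)
          (h.isIdempotentElem_inv_mul s) hs.2⟩
  rw [hclass]
  exact (isOpen_compl_singleton.preimage (by fun_prop)).inter
    (isOpen_compl_singleton.preimage (by fun_prop))

theorem isOpen_of_forall_subset [T1Space S] (h : IsInverseSemigroup S inv)
    (hprim : IsPrimitiveInverse S) (hinvc : Continuous inv) {T : Set S}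
    (hT : ∀ s ∈ T, s ≠ 0 → hClass inv s ⊆ T) (h0 : (0 : S) ∈ T → T ∈ 𝓝 0) : IsOpen T := by
  refine isOpen_iff_mem_nhds.2 fun s hs => ?_
  by_cases hs0 : s = 0
  · subst hs0
    exact h0 hs
  · exact Filter.mem_of_superset ((isOpen h hprim hinvc hs0).mem_nhds (mem_self s))
      (hT s hs hs0)

end hClass

theorem IsMaximalSubgroup.exists_eq_hClass {S : Type*} [Semigroup S] {inv : S → S}
    (h : IsInverseSemigroup S inv) {H : Set S} (hH : IsMaximalSubgroup S H) :
    ∃ e, IsIdempotentElem e ∧ H = hClass inv e := by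
  obtain ⟨⟨_, _, g, hg, hid, hinv⟩, hmax⟩ := hH
  have hgg : IsIdempotentElem g := (hid g hg).1
  exact ⟨g, hgg, (hmax _ (hClass.isSubgroupSet h hgg) (hClass.subset_of_isGroup h hg hid hinv)).symm⟩

namespace IsInverseSemigroup

variable {S : Type*} [SemigroupWithZero S] [TopologicalSpace S] [T2Space S] [ContinuousMul S]
  {inv : S → S}

/-- If infinitely many classes met `W₁` without lying in `U`, each would contain the non-empty
open set `Q` of those `q` with `s * inv y * q ∈ W₁`, where `s ∈ W₁` and `y ∉ U`. As
`y = q * inv (s * inv y * q) * s`, the sets `Q` avoid `W₁`, so they would form an infinite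
locally finite family. -/
theorem exists_nhds_zero_hClass_subset (h : IsInverseSemigroup S inv) (hinvc : Continuous inv)
    (hprim : IsPrimitiveInverse S) (hpc : IsPseudocompact S) {U : Set S} (hU : U ∈ 𝓝 (0 : S)) :
    ∃ W ∈ 𝓝 (0 : S), ∀ s ∈ W, s ≠ 0 → hClass inv s ⊆ U := by
  obtain ⟨W₁, hW₁, h0W₁, hW₁U⟩ := exists_isOpen_mem_forall_mem₃
    (g := fun a b c : S => a * inv b * c) (by fun_prop) (x := 0) (by simpa using hU)
  set 𝒦 : Set (Set S) := {H | ∃ s ∈ W₁, s ≠ 0 ∧ H = hClass inv s ∧ ¬H ⊆ U}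
  suffices h𝒦 : 𝒦.Finite by
    have hclosed : IsClosed (⋃₀ 𝒦) := by
      rw [sUnion_eq_biUnion]
      exact h𝒦.isClosed_biUnion fun _ ⟨s, _, _, hH, _⟩ => hH ▸ hClass.isClosed hinvc s
    have h0 : (0 : S) ∉ ⋃₀ 𝒦 := fun ⟨_, ⟨s, _, hs0, hH, _⟩, h0H⟩ =>
      hClass.ne_zero_of_mem h hs0 (hH ▸ h0H) rfl
    refine ⟨W₁ \ ⋃₀ 𝒦, (hW₁.sdiff hclosed).mem_nhds ⟨h0W₁, h0⟩, fun s hs hs0 => ?_⟩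
    by_contra hsU
    exact hs.2 ⟨_, ⟨s, hs.1, hs0, rfl, hsU⟩, hClass.mem_self s⟩
  have hchoice : ∀ H : 𝒦, ∃ y s, y ≠ 0 ∧ y ∉ U ∧ (H : Set S) = hClass inv y ∧ s ∈ W₁ ∧
      s ∈ hClass inv y := by
    rintro ⟨H, s, hsW, hs0, rfl, hsU⟩
    obtain ⟨y, hy, hyU⟩ := not_subset.1 hsU
    have hys := hClass.eq_of_mem hy
    exact ⟨y, s, hClass.ne_zero_of_mem h hs0 hy, hyU, hys.symm, hsW, hys ▸ hClass.mem_self s⟩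
  choose y s hy0 hyU hH hsW hsy using hchoice
  let Q : 𝒦 → Set S := fun H => {q ∈ hClass inv (y H) | s H * inv (y H) * q ∈ W₁}
  have hQW₁ : ∀ H, Disjoint (Q H) W₁ := fun H => Set.disjoint_left.2 fun q hq hqW => hyU H <|
    hClass.mul_inv_mul_inv_mul h (hsy H) hq.1 ▸ hW₁U q hqW _ hq.2 _ (hsW H)
  have hQ : LocallyFinite Q := by
    intro z
    by_cases hz : z = 0
    · subst hz
      refine ⟨W₁, hW₁.mem_nhds h0W₁, Set.finite_empty.subset fun H ⟨q, hq, hqW⟩ => ?_⟩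
      exact Set.disjoint_left.1 (hQW₁ H) hq hqW
    · refine ⟨hClass inv z, (hClass.isOpen h hprim hinvc hz).mem_nhds (hClass.mem_self z),
        Set.Subsingleton.finite fun H₁ ⟨q₁, hq₁, hz₁⟩ H₂ ⟨q₂, hq₂, hz₂⟩ => Subtype.ext ?_⟩
      rw [hH, hH, hClass.eq_of_mem_of_mem hq₁.1 hz₁, hClass.eq_of_mem_of_mem hq₂.1 hz₂]
  rw [← Set.finite_coe_iff]
  refine hpc.finite_of_locallyFinite hQ (fun H => ?_) fun H => ⟨y H, hClass.mem_self _, ?_⟩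
  · exact (hClass.isOpen h hprim hinvc (hy0 H)).inter (hW₁.preimage (by fun_prop))
  · rw [hClass.mul_inv_mul_self_of_mem h (hsy H)]
    exact hsW H

theorem exists_isClopen_zero_mem_subset (h : IsInverseSemigroup S inv) (hinvc : Continuous inv)
    (hprim : IsPrimitiveInverse S) (hpc : IsPseudocompact S) {U : Set S} (hU : U ∈ 𝓝 (0 : S)) :
    ∃ C, IsClopen C ∧ (0 : S) ∈ C ∧ C ⊆ U := by
  obtain ⟨W, hW, hWU⟩ := h.exists_nhds_zero_hClass_subset hinvc hprim hpc hU
  let C : Set S := {s | s = 0 ∨ hClass inv s ⊆ U}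
  have hCopen : IsOpen C := hClass.isOpen_of_forall_subset h hprim hinvc
    (fun s hs hs0 y hy => Or.inr <| hClass.eq_of_mem hy ▸ hs.resolve_left hs0)
    fun _ => Filter.mem_of_superset hW fun s hsW => or_iff_not_imp_left.2 (hWU s hsW)
  have hCclosed : IsOpen Cᶜ := hClass.isOpen_of_forall_subset h hprim hinvc
    (fun s hs hs0 y hy hyC => hs <| hyC.elim (absurd · (hClass.ne_zero_of_mem h hs0 hy))
      fun hyU => Or.inr (hClass.eq_of_mem hy ▸ hyU))
    fun h0 => absurd (Or.inl rfl) h0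
  exact ⟨C, ⟨isOpen_compl_iff.1 hCclosed, hCopen⟩, Or.inl rfl,
    fun s hs => hs.elim (· ▸ mem_of_mem_nhds hU) (· (hClass.mem_self s))⟩

theorem completelyRegularSpace (h : IsInverseSemigroup S inv) (hinvc : Continuous inv)
    (hprim : IsPrimitiveInverse S) (hpc : IsPseudocompact S) : CompletelyRegularSpace S := by
  refine ⟨fun x K hK hxK => ?_⟩
  by_cases hx : x = 0
  · subst hx
    obtain ⟨C, hC, h0C, hCK⟩ :=
      h.exists_isClopen_zero_mem_subset hinvc hprim hpc (hK.isOpen_compl.mem_nhds hxK)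
    exact ⟨Cᶜ.indicator 1, hC.compl.continuous_indicator continuous_const, by simp [h0C],
      fun y hy => indicator_of_mem (show y ∈ Cᶜ from fun hyC => hCK hyC hy) _⟩
  have := hClass.completelyRegularSpace h hinvc (h.isIdempotentElem_inv_mul x)
  have := (hClass.homeomorphInvMul h x).isInducing.completelyRegularSpace
  obtain ⟨g, hg, hgx, hgK⟩ := CompletelyRegularSpace.completely_regular
    (⟨x, hClass.mem_self x⟩ : hClass inv x) _ (hK.preimage continuous_subtype_val) hxK
  have hclopen : IsClopen (hClass inv x) :=
    ⟨hClass.isClosed hinvc x, hClass.isOpen h hprim hinvc hx⟩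
  obtain ⟨f, hf, hfg, hf1⟩ := hclopen.exists_continuous_extend hg
  refine ⟨f, hf, (hfg _).trans hgx, fun y hy => ?_⟩
  by_cases hyx : y ∈ hClass inv x
  · exact (hfg ⟨y, hyx⟩).trans (hgK hy)
  · exact hf1 hyx

theorem normalSpace_iff (h : IsInverseSemigroup S inv) (hinvc : Continuous inv)
    (hprim : IsPrimitiveInverse S) (hpc : IsPseudocompact S) :
    NormalSpace S ↔ ∀ H : Set S, IsMaximalSubgroup S H → NormalSpace H := by
  refine ⟨fun _ H hH => ?_, fun hN => ⟨fun s t hs ht hst => ?_⟩⟩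
  · obtain ⟨e, -, rfl⟩ := hH.exists_eq_hClass h
    exact (hClass.isClosed hinvc e).isClosedEmbedding_subtypeVal.normalSpace
  wlog h0t : (0 : S) ∉ t generalizing s t
  · exact (this t s ht hs hst.symm fun h0s => hst.notMem_of_mem_left h0s (not_not.1 h0t)).symm
  obtain ⟨C, hC, h0C, hCt⟩ :=
    h.exists_isClopen_zero_mem_subset hinvc hprim hpc (ht.isOpen_compl.mem_nhds h0t)
  refine SeparatedNhds.of_isClopen_of_pairwiseDisjoint hC (𝒜 := hClass inv '' {0}ᶜ) ?_ ?_ ?_ ?_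
    hs ht hst (subset_compl_iff_disjoint_left.1 hCt)
  · rintro _ ⟨x, -, rfl⟩ _ ⟨y, -, rfl⟩ hxy
    exact Set.disjoint_left.2 fun z hzx hzy => hxy (hClass.eq_of_mem_of_mem hzx hzy)
  · rintro _ ⟨x, hx, rfl⟩
    exact hClass.isOpen h hprim hinvc hx
  · rintro _ ⟨x, -, rfl⟩
    have := hN _ (hClass.isMaximalSubgroup h (h.isIdempotentElem_inv_mul x))
    exact (hClass.homeomorphInvMul h x).isClosedEmbedding.normalSpace
  · intro z hz
    exact ⟨_, ⟨z, fun hz0 => hz (hz0 ▸ h0C), rfl⟩, hClass.mem_self z⟩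

end IsInverseSemigroup

theorem tychonoff_and_normal_iff_maximalSubgroups_normal_general
    {S : Type*} [SemigroupWithZero S] [TopologicalSpace S] [T2Space S]
    (continuous_mul : Continuous fun p : S × S => p.1 * p.2)
    (inv : S → S) (hinv : IsInverseSemigroup S inv) (hinvc : Continuous inv)
    (hprim : IsPrimitiveInverse S)
    (hpc : IsPseudocompact S) :
    T35Space S ∧
      (NormalSpace S ↔ ∀ H : Set S, IsMaximalSubgroup S H → NormalSpace ↥H) := by
  have : ContinuousMul S := ⟨continuous_mul⟩
  have := hinv.completelyRegularSpace hinvc hprim hpc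
  exact ⟨{}, hinv.normalSpace_iff hinvc hprim hpc⟩

/-- Every primitive Hausdorff pseudocompact topological
inverse semigroup `S` is a Tychonoff space; moreover, `S` is normal iff every
maximal subgroup of `S` is a normal subspace of `S`. -/
theorem tychonoff_and_normal_iff_maximalSubgroups_normal
    {S : Type*} [SemigroupWithZero S] [TopologicalSpace S] [T2Space S]
    (continuous_mul : Continuous fun p : S × S => p.1 * p.2)
    (inv : S → S) (hinv : IsInverseSemigroup S inv) (hinvc : Continuous inv)
    (hnt : Nontrivial S) (hprim : IsPrimitiveInverse S)
    (hpc : IsPseudocompact S) :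
    T35Space S ∧
      (NormalSpace S ↔ ∀ H : Set S, IsMaximalSubgroup S H → NormalSpace ↥H) :=
  tychonoff_and_normal_iff_maximalSubgroups_normal_general continuous_mul inv hinv hinvc hprim hpc
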